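/- Let (C, ▷, Tr) be a guarded traced cartesian category. Define f† = Tr^X_{A,X}(⟨f, f⟩) for f : ▷X × A → X. Then † satisfies the guarded fixpoint identity: f† = f ∘ (p_X × id_A) ∘ ⟨f†, id_A⟩. -/

import Mathlib

open CategoryTheory CategoryTheory.Limits

/-!
Right tightening turns `f† = Tr⟨f, f⟩` into `Tr⟨f, 𝟙⟩ ≫ f`, and `Tr⟨f, 𝟙⟩` splits into the
traces `Tr⟨f, π₁⟩ : A → ▷X` and `Tr⟨f, π₂⟩ : A → A`. The second is the identity by superposing,
since the `A`-output bypasses the loop. For the first, sliding along the diagonal `X → X × X` runs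
two copies of the loop, and Vanishing II separates them into nested traces: the inner one computes
`f†` while carrying the guarded input along, and the outer one is then a yanking, which yields
`f† ≫ p_X`.
-/

namespace GuardedTrace

variable {C : Type*} [Category C] [HasFiniteProducts C] (F : C ⥤ C) (p : 𝟭 C ⟶ F)
  (Tr : ∀ {X A B : C}, (F.obj X ⨯ A ⟶ X ⨯ B) → (A ⟶ B))

def LeftTightening : Prop :=
  ∀ {X A A' B : C} (f : F.obj X ⨯ A ⟶ X ⨯ B) (g : A' ⟶ A),
    Tr (prod.map (𝟙 (F.obj X)) g ≫ f) = g ≫ Tr f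

def RightTightening : Prop :=
  ∀ {X A B B' : C} (f : F.obj X ⨯ A ⟶ X ⨯ B) (g : B ⟶ B'),
    Tr (f ≫ prod.map (𝟙 X) g) = Tr f ≫ g

def Sliding : Prop :=
  ∀ {X X' A B : C} (f : F.obj X ⨯ A ⟶ X' ⨯ B) (g : X' ⟶ X),
    Tr (f ≫ prod.map g (𝟙 B)) = Tr (prod.map (F.map g) (𝟙 A) ≫ f)

def VanishingII : Prop :=
  ∀ {X Y A B : C} (f : F.obj X ⨯ (F.obj Y ⨯ A) ⟶ X ⨯ (Y ⨯ B)),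
    Tr (Tr f) =
      Tr (prod.map (prod.lift (F.map prod.fst) (F.map prod.snd)) (𝟙 A) ≫
        (prod.associator (F.obj X) (F.obj Y) A).hom ≫ f ≫ (prod.associator X Y B).inv)

def Superposing : Prop :=
  ∀ {X A B D : C} (f : F.obj X ⨯ A ⟶ X ⨯ B),
    Tr ((prod.associator (F.obj X) A D).inv ≫ prod.map f (𝟙 D) ≫
        (prod.associator X B D).hom) = prod.map (Tr f) (𝟙 D)

def Yanking : Prop :=
  ∀ X : C, Tr (prod.braiding (F.obj X) X).hom = p.app X

variable {F} in
noncomputable def dagger {X A : C} (f : F.obj X ⨯ A ⟶ X) : A ⟶ X :=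
  Tr (prod.lift f f)

variable {F p Tr}

attribute [local simp] prod.lift_fst prod.lift_snd prod.lift_fst_assoc prod.lift_snd_assoc
  prod.comp_lift prod.comp_lift_assoc

lemma trace_lift_comp (hright : RightTightening F @Tr) {X A B B' : C}
    (f : F.obj X ⨯ A ⟶ X) (g : F.obj X ⨯ A ⟶ B) (h : B ⟶ B') :
    Tr (prod.lift f (g ≫ h)) = Tr (prod.lift f g) ≫ h := by
  rw [← hright]
  congr 1
  apply prod.hom_ext <;> simp

lemma trace_lift_id (hright : RightTightening F @Tr) {X A : C} (f : F.obj X ⨯ A ⟶ X) :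
    Tr (prod.lift f (𝟙 _)) =
      prod.lift (Tr (prod.lift f prod.fst)) (Tr (prod.lift f prod.snd)) := by
  apply prod.hom_ext
  · simpa using (trace_lift_comp hright f (𝟙 _) prod.fst).symm
  · simpa using (trace_lift_comp hright f (𝟙 _) prod.snd).symm

lemma trace_lift_snd (hleft : LeftTightening F @Tr) (hright : RightTightening F @Tr)
    (hsuper : Superposing F @Tr) {X A : C} (f : F.obj X ⨯ A ⟶ X) :
    Tr (prod.lift f prod.snd) = 𝟙 A := by
  have hdecomp : prod.lift f prod.snd =
      prod.map (𝟙 (F.obj X)) (diag A) ≫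
        ((prod.associator (F.obj X) A A).inv ≫
          prod.map (prod.lift f (terminal.from _)) (𝟙 A) ≫
          (prod.associator X (⊤_ C) A).hom) ≫ prod.map (𝟙 X) prod.snd := by
    apply prod.hom_ext <;> simp
  rw [hdecomp, hleft, hright, hsuper]
  simp

lemma trace_braiding_comp_map (hleft : LeftTightening F @Tr) (hyank : Yanking F p @Tr)
    {X A : C} (t : A ⟶ X) :
    Tr ((prod.braiding (F.obj X) A).hom ≫ prod.map t (𝟙 (F.obj X))) = t ≫ p.app X := by
  have hnat : (prod.braiding (F.obj X) A).hom ≫ prod.map t (𝟙 (F.obj X)) =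
      prod.map (𝟙 (F.obj X)) t ≫ (prod.braiding (F.obj X) X).hom := by
    apply prod.hom_ext <;> simp
  rw [hnat, hleft, hyank]

lemma trace_superpose_braiding (hleft : LeftTightening F @Tr) (hsuper : Superposing F @Tr)
    {X A B D : C} (k : F.obj X ⨯ A ⟶ X ⨯ B) :
    Tr (prod.map (𝟙 (F.obj X)) (prod.braiding D A).hom ≫
        (prod.associator (F.obj X) A D).inv ≫ prod.map k (𝟙 D) ≫
        (prod.associator X B D).hom) =
      (prod.braiding D A).hom ≫ prod.map (Tr k) (𝟙 D) := by
  rw [hleft, hsuper]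

lemma trace_lift_fst (hleft : LeftTightening F @Tr) (hslide : Sliding F @Tr)
    (hvan2 : VanishingII F @Tr) (hsuper : Superposing F @Tr) (hyank : Yanking F p @Tr)
    {X A : C} (f : F.obj X ⨯ A ⟶ X) :
    Tr (prod.lift f prod.fst) = dagger @Tr f ≫ p.app X := by
  let W : F.obj X ⨯ (F.obj X ⨯ A) ⟶ X ⨯ (X ⨯ F.obj X) :=
    prod.map (𝟙 (F.obj X)) (prod.braiding (F.obj X) A).hom ≫
      (prod.associator (F.obj X) A (F.obj X)).inv ≫ prod.map (prod.lift f f) (𝟙 _) ≫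
      (prod.associator X X (F.obj X)).hom
  let g : F.obj (X ⨯ X) ⨯ A ⟶ X ⨯ F.obj X :=
    prod.lift (prod.lift (prod.fst ≫ F.map prod.fst) prod.snd ≫ f)
      (prod.fst ≫ F.map prod.snd)
  have hdiag : prod.map (F.map (diag X)) (𝟙 A) ≫ g = prod.lift f prod.fst := by
    apply prod.hom_ext <;> simp [g, ← F.map_comp]
  have hvanishing : prod.map (prod.lift (F.map prod.fst) (F.map prod.snd)) (𝟙 A) ≫
      (prod.associator (F.obj X) (F.obj X) A).hom ≫ W ≫ (prod.associator X X (F.obj X)).inv =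
      g ≫ prod.map (diag X) (𝟙 _) := by
    apply prod.hom_ext
    · apply prod.hom_ext <;> simp [W, g]
    · simp [W, g]
  calc Tr (prod.lift f prod.fst)
      = Tr (g ≫ prod.map (diag X) (𝟙 _)) := by rw [hslide, hdiag]
    _ = Tr (Tr W) := by rw [hvan2, hvanishing]
    _ = dagger @Tr f ≫ p.app X := by
      rw [trace_superpose_braiding hleft hsuper, trace_braiding_comp_map hleft hyank]
      rfl

end GuardedTrace

open GuardedTrace

theorem stmt11 {C : Type*} [Category C] [HasFiniteProducts C]
    (F : C ⥤ C) (p : 𝟭 C ⟶ F)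
    (Tr : ∀ {X A B : C}, (F.obj X ⨯ A ⟶ X ⨯ B) → (A ⟶ B))
    (hleft : ∀ {X A A' B : C} (f : F.obj X ⨯ A ⟶ X ⨯ B) (g : A' ⟶ A),
      Tr (prod.map (𝟙 (F.obj X)) g ≫ f) = g ≫ Tr f)
    (hright : ∀ {X A B B' : C} (f : F.obj X ⨯ A ⟶ X ⨯ B) (g : B ⟶ B'),
      Tr (f ≫ prod.map (𝟙 X) g) = Tr f ≫ g)
    (hslide : ∀ {X X' A B : C} (f : F.obj X ⨯ A ⟶ X' ⨯ B) (g : X' ⟶ X),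
      Tr (f ≫ prod.map g (𝟙 B)) = Tr (prod.map (F.map g) (𝟙 A) ≫ f))
    (hvan2 : ∀ {X Y A B : C} (f : F.obj X ⨯ (F.obj Y ⨯ A) ⟶ X ⨯ (Y ⨯ B)),
      Tr (Tr f) =
        Tr (prod.map (prod.lift (F.map prod.fst) (F.map prod.snd)) (𝟙 A) ≫
          (prod.associator (F.obj X) (F.obj Y) A).hom ≫ f ≫ (prod.associator X Y B).inv))
    (hsuper : ∀ {X A B D : C} (f : F.obj X ⨯ A ⟶ X ⨯ B),
      Tr ((prod.associator (F.obj X) A D).inv ≫ prod.map f (𝟙 D) ≫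
          (prod.associator X B D).hom)
        = prod.map (Tr f) (𝟙 D))
    (hyank : ∀ X : C,
      Tr (prod.lift (prod.snd : F.obj X ⨯ X ⟶ X) prod.fst) = p.app X) :
    ∀ {X A : C} (f : F.obj X ⨯ A ⟶ X),
      Tr (prod.lift f f) =
        prod.lift (Tr (prod.lift f f)) (𝟙 A) ≫ prod.map (p.app X) (𝟙 A) ≫ f := by
  intro X A f
  calc Tr (prod.lift f f) = Tr (prod.lift f (𝟙 _)) ≫ f := by
        simpa using trace_lift_comp @hright f (𝟙 _) f
    _ = prod.lift (Tr (prod.lift f f) ≫ p.app X) (𝟙 A) ≫ f := by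
        rw [trace_lift_id @hright, trace_lift_snd @hleft @hright @hsuper,
          trace_lift_fst @hleft @hslide @hvan2 @hsuper hyank]
        rfl
    _ = prod.lift (Tr (prod.lift f f)) (𝟙 A) ≫ prod.map (p.app X) (𝟙 A) ≫ f := by
        rw [prod.lift_map_assoc, Category.comp_id]
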